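/- arXiv:2402.07066 — 2 statements merged into one kernel-verified Lean document; each statement's English description precedes it below -/
import Mathlib

section
/- For every positive integer k, J_k C_k = C_k J_k = 2^{-k} J_k, where J_k is the all-ones 2^k × 2^k matrix. -/
open Matrix

/-- All-ones matrix of size `2^k × 2^k`. -/
def Jmat (k : ℕ) : Matrix (Fin (2^k)) (Fin (2^k)) ℝ := Matrix.of fun _ _ => 1

/-- The recursively defined correlation matrices: `Cmat 1 = [[1,-1/2],[-1/2,1]]` and
`Cmat (k+1) = [[Cmat k, -J_k/2^(2k+1)], [-J_k/2^(2k+1), Cmat k]]`.  (`Cmat 0` is the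
`1×1` matrix `[1]`, which makes the recursion start correctly at `k = 1`.) -/
noncomputable def Cmat : (k : ℕ) → Matrix (Fin (2^k)) (Fin (2^k)) ℝ
  | 0 => Matrix.of fun _ _ => 1
  | (k+1) =>
      Matrix.reindex (finSumFinEquiv.trans (finCongr (by ring : 2^k + 2^k = 2^(k+1)))) (finSumFinEquiv.trans (finCongr (by ring : 2^k + 2^k = 2^(k+1))))
        (Matrix.fromBlocks (Cmat k) (-((1:ℝ)/2^(2*k+1)) • Jmat k)
          (-((1:ℝ)/2^(2*k+1)) • Jmat k) (Cmat k))

lemma Jmat_mul_Jmat (k : ℕ) : Jmat k * Jmat k = ((2:ℝ)^k) • Jmat k := by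
  ext i j
  simp [Jmat, Matrix.mul_apply, Finset.sum_const, Finset.card_univ]

lemma Jmat_succ (k : ℕ) :
    Jmat (k+1) = Matrix.reindex (finSumFinEquiv.trans (finCongr (by ring : 2^k + 2^k = 2^(k+1)))) (finSumFinEquiv.trans (finCongr (by ring : 2^k + 2^k = 2^(k+1))))
      (Matrix.fromBlocks (Jmat k) (Jmat k) (Jmat k) (Jmat k)) := by
  ext i j
  simp only [Matrix.reindex_apply, Matrix.submatrix_apply]
  rcases ((finSumFinEquiv.trans (finCongr (by ring : 2^k + 2^k = 2^(k+1))))).symm i with a|a <;>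
    rcases ((finSumFinEquiv.trans (finCongr (by ring : 2^k + 2^k = 2^(k+1))))).symm j with b|b <;>
      rfl

lemma key (k : ℕ) :
    Jmat k * Cmat k = ((2:ℝ)^k)⁻¹ • Jmat k ∧ Cmat k * Jmat k = ((2:ℝ)^k)⁻¹ • Jmat k := by
  induction k with
  | zero =>
      have h : Cmat 0 = Jmat 0 := rfl
      rw [h, Jmat_mul_Jmat]
      norm_num
  | succ k ih =>
      obtain ⟨ih1, ih2⟩ := ih
      have harith : ((2:ℝ)^k)⁻¹ + (-((1:ℝ)/2^(2*k+1)) * (2:ℝ)^k) = ((2:ℝ)^(k+1))⁻¹ := by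
        have h2 : ((2:ℝ))^(2*k+1) = 2^k * 2^k * 2 := by ring
        rw [h2]
        have : ((2:ℝ))^k ≠ 0 := by positivity
        field_simp
        ring
      set e := (finSumFinEquiv.trans (finCongr (by ring : 2^k + 2^k = 2^(k+1))))
      have hC : Cmat (k+1) = Matrix.reindex e e
          (Matrix.fromBlocks (Cmat k) (-((1:ℝ)/2^(2*k+1)) • Jmat k)
            (-((1:ℝ)/2^(2*k+1)) • Jmat k) (Cmat k)) := rfl
      have hJ := Jmat_succ k
      have hblock : ((2:ℝ)^k)⁻¹ • Jmat k + (-((1:ℝ)/2^(2*k+1)) • Jmat k) * Jmat k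
          = ((2:ℝ)^(k+1))⁻¹ • Jmat k := by
        rw [Matrix.smul_mul, Jmat_mul_Jmat, smul_smul, ← add_smul, harith]
      have hblock' : (-((1:ℝ)/2^(2*k+1)) • Jmat k) * Jmat k + ((2:ℝ)^k)⁻¹ • Jmat k
          = ((2:ℝ)^(k+1))⁻¹ • Jmat k := by rw [add_comm]; exact hblock
      have hblockJ : Jmat k * (-((1:ℝ)/2^(2*k+1)) • Jmat k)
          = (-((1:ℝ)/2^(2*k+1)) • Jmat k) * Jmat k := by
        rw [Matrix.mul_smul, Matrix.smul_mul]
      constructor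
      · rw [hC, hJ, Matrix.reindex_apply, Matrix.reindex_apply, Matrix.submatrix_mul_equiv,
          Matrix.fromBlocks_multiply]
        rw [ih1, hblockJ, hblock, hblock']
        rw [← Matrix.fromBlocks_smul, Matrix.submatrix_smul]; rfl
      · rw [hC, hJ, Matrix.reindex_apply, Matrix.reindex_apply, Matrix.submatrix_mul_equiv,
          Matrix.fromBlocks_multiply]
        rw [ih2, hblock, hblock']
        rw [← Matrix.fromBlocks_smul, Matrix.submatrix_smul]; rfl

theorem Jmat_mul_Cmat (k : ℕ) (hk : 1 ≤ k) :
    Jmat k * Cmat k = ((2:ℝ)^k)⁻¹ • Jmat k ∧ Cmat k * Jmat k = ((2:ℝ)^k)⁻¹ • Jmat k := key k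
end

section
/- For odd k ≥ 3, letting M_k = 2^{k-1} + 2^{k-3} + ... + 1 and V_k = ∑_{i,j=1}^{M_k} C_k(i,j) (the variance under covariance C_k of the sum of the first M_k coordinates), one has V_k ≥ V_{k-2} + 2/3, where V_{k-2} is the analogous quantity for C_{k-2}. -/
open Matrix

/-- `M k = 2^(k-1) + 2^(k-3) + ... + 1` for odd `k`. -/
def Mnum (k : ℕ) : ℕ := ∑ i ∈ Finset.range ((k - 1) / 2 + 1), 2^(2*i)

/-- `V k`: the variance (under covariance `C_k`) of the sum of the first `M k`
coordinates, i.e. `∑_{i,j < M k} C_k(i,j)`. -/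
noncomputable def Vnum (k : ℕ) : ℝ :=
  ∑ i : Fin (2^k), ∑ j : Fin (2^k),
    if (i : ℕ) < Mnum k ∧ (j : ℕ) < Mnum k then Cmat k i j else 0

/-!
Write `V(k, m) = ∑_{i,j < m} C_k(i,j)`. The entries of `C_k` sum to `1`, and the off-diagonal
blocks of `C_{k+1}` are constant, so `V(k+1, m) = V(k, m)` for `m ≤ 2^k`, while
`V(k+1, 2^k + m) = V(k, m) + 1 - m / 2^k`. Since `M_{n+2} = 2^(n+1) + M_n` and
`3 M_n + 1 = 2^(n+1)`, two steps give `V_{n+2} = V_n + 2/3 + 1 / (3 · 2^(n+1))`.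
-/

section QuadraticForm

variable {α l m : Type*} [CommRing α] [Fintype l] [Fintype m]

lemma sumElim_dotProduct_fromBlocks_mulVec (A : Matrix l l α) (B : Matrix l m α)
    (C : Matrix m l α) (D : Matrix m m α) (x : l → α) (y : m → α) :
    Sum.elim x y ⬝ᵥ (fromBlocks A B C D *ᵥ Sum.elim x y) =
      x ⬝ᵥ (A *ᵥ x) + x ⬝ᵥ (B *ᵥ y) + y ⬝ᵥ (C *ᵥ x) + y ⬝ᵥ (D *ᵥ y) := by
  simp only [fromBlocks_mulVec, Sum.elim_comp_inl, Sum.elim_comp_inr,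
    sumElim_dotProduct_sumElim, dotProduct_add]
  ring

lemma dotProduct_reindex_mulVec (e : l ≃ m) (A : Matrix l l α) (v : m → α) :
    v ⬝ᵥ (reindex e e A *ᵥ v) = (v ∘ e) ⬝ᵥ (A *ᵥ (v ∘ e)) := by
  rw [reindex_apply, submatrix_mulVec_equiv, Equiv.symm_symm, ← dotProduct_comp_equiv_symm]

lemma dotProduct_of_const_mulVec (c : α) (x : l → α) (y : m → α) :
    x ⬝ᵥ (of (fun _ _ => c) *ᵥ y) = c * (∑ i, x i) * ∑ j, y j := by
  simp [dotProduct, mulVec, Finset.mul_sum, mul_comm, mul_left_comm]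

end QuadraticForm

def finSumFinPowEquiv (k : ℕ) : Fin (2^k) ⊕ Fin (2^k) ≃ Fin (2^(k+1)) :=
  finSumFinEquiv.trans (finCongr (by ring : 2^k + 2^k = 2^(k+1)))

lemma finSumFinPowEquiv_inl_val (k : ℕ) (a : Fin (2^k)) :
    (finSumFinPowEquiv k (.inl a) : ℕ) = a := rfl

lemma finSumFinPowEquiv_inr_val (k : ℕ) (a : Fin (2^k)) :
    (finSumFinPowEquiv k (.inr a) : ℕ) = 2^k + a := rfl

lemma Cmat_succ (k : ℕ) :
    Cmat (k+1) = reindex (finSumFinPowEquiv k) (finSumFinPowEquiv k)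
      (fromBlocks (Cmat k) (-((1:ℝ)/2^(2*k+1)) • Jmat k)
        (-((1:ℝ)/2^(2*k+1)) • Jmat k) (Cmat k)) := rfl

def prefixIndicator {n : ℕ} (m : ℕ) : Fin n → ℝ := fun i => if (i : ℕ) < m then 1 else 0

lemma sum_prefixIndicator {n m : ℕ} (hm : m ≤ n) : ∑ i : Fin n, prefixIndicator m i = m := by
  simp [prefixIndicator, Finset.sum_boole, Fin.card_filter_val_lt, hm]

lemma prefixIndicator_comp_finSumFinPowEquiv_of_le {k m : ℕ} (hm : m ≤ 2^k) :
    prefixIndicator m ∘ finSumFinPowEquiv k = Sum.elim (prefixIndicator m) 0 := by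
  ext (a | a)
  · rfl
  · simp only [prefixIndicator, Function.comp_apply, finSumFinPowEquiv_inr_val, Sum.elim_inr,
      Pi.zero_apply]
    exact if_neg (by omega)

lemma prefixIndicator_comp_finSumFinPowEquiv_add (k m : ℕ) :
    prefixIndicator (2^k + m) ∘ finSumFinPowEquiv k =
      Sum.elim (1 : Fin (2^k) → ℝ) (prefixIndicator m) := by
  ext (a | a)
  · simp only [prefixIndicator, Function.comp_apply, finSumFinPowEquiv_inl_val, Sum.elim_inl,
      Pi.one_apply]
    exact if_pos (by omega)
  · simp only [prefixIndicator, Function.comp_apply, finSumFinPowEquiv_inr_val, Sum.elim_inr,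
      Nat.add_lt_add_iff_left]

lemma dotProduct_Cmat_succ_mulVec {k : ℕ} {v : Fin (2^(k+1)) → ℝ} {x y : Fin (2^k) → ℝ}
    (hv : v ∘ finSumFinPowEquiv k = Sum.elim x y) :
    v ⬝ᵥ (Cmat (k+1) *ᵥ v) =
      x ⬝ᵥ (Cmat k *ᵥ x) + y ⬝ᵥ (Cmat k *ᵥ y) - (∑ i, x i) * (∑ j, y j) / 4^k := by
  rw [Cmat_succ, dotProduct_reindex_mulVec, hv, sumElim_dotProduct_fromBlocks_mulVec]
  simp only [Jmat, smul_mulVec, dotProduct_smul, dotProduct_of_const_mulVec, smul_eq_mul]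
  rw [pow_succ, pow_mul]
  ring

noncomputable def prefixVariance (k m : ℕ) : ℝ :=
  prefixIndicator m ⬝ᵥ (Cmat k *ᵥ prefixIndicator m)

lemma Vnum_eq_prefixVariance (k : ℕ) : Vnum k = prefixVariance k (Mnum k) := by
  simp only [Vnum, prefixVariance, prefixIndicator, dotProduct, mulVec, Finset.mul_sum]
  refine Finset.sum_congr rfl fun i _ => Finset.sum_congr rfl fun j _ => ?_
  split_ifs <;> simp_all

lemma one_dotProduct_Cmat_mulVec_one (k : ℕ) : (1 : Fin (2^k) → ℝ) ⬝ᵥ (Cmat k *ᵥ 1) = 1 := by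
  induction k with
  | zero => simp [Cmat, dotProduct, mulVec]
  | succ k ih =>
    rw [dotProduct_Cmat_succ_mulVec (x := 1) (y := 1) (by ext (_ | _) <;> rfl), ih]
    simp only [Pi.one_apply, Finset.sum_const, Finset.card_univ, Fintype.card_fin,
      nsmul_eq_mul, mul_one, Nat.cast_pow, Nat.cast_ofNat]
    rw [← mul_pow]
    field_simp
    ring

lemma prefixVariance_succ_of_le {k m : ℕ} (hm : m ≤ 2^k) :
    prefixVariance (k+1) m = prefixVariance k m := by
  rw [prefixVariance,
    dotProduct_Cmat_succ_mulVec (prefixIndicator_comp_finSumFinPowEquiv_of_le hm)]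
  simp [prefixVariance]

lemma prefixVariance_succ_add {k m : ℕ} (hm : m ≤ 2^k) :
    prefixVariance (k+1) (2^k + m) = prefixVariance k m + 1 - m / 2^k := by
  rw [prefixVariance, dotProduct_Cmat_succ_mulVec (prefixIndicator_comp_finSumFinPowEquiv_add k m),
    one_dotProduct_Cmat_mulVec_one, sum_prefixIndicator hm, prefixVariance]
  simp only [Pi.one_apply, Finset.sum_const, Finset.card_univ, Fintype.card_fin,
      nsmul_eq_mul, mul_one, Nat.cast_pow, Nat.cast_ofNat]
  rw [show (4:ℝ)^k = 2^k * 2^k by rw [← mul_pow]; norm_num]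
  field_simp
  ring

lemma three_mul_Mnum_add_one {n : ℕ} (hn : Odd n) : 3 * Mnum n + 1 = 2^(n+1) := by
  obtain ⟨s, rfl⟩ := hn
  rw [Mnum, show (2 * s + 1 - 1) / 2 = s by omega, show 2 * s + 1 + 1 = 2 * (s + 1) by ring]
  simp only [pow_mul]
  rw [mul_comm]
  exact geom_sum_mul_add 3 (s + 1)

lemma Mnum_add_two {n : ℕ} (hn : Odd n) : Mnum (n+2) = 2^(n+1) + Mnum n := by
  obtain ⟨s, rfl⟩ := hn
  rw [Mnum, Mnum, show (2 * s + 1 + 2 - 1) / 2 = s + 1 by omega,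
    show (2 * s + 1 - 1) / 2 = s by omega, Finset.sum_range_succ, add_comm,
    show 2 * (s + 1) = 2 * s + 1 + 1 by ring]

lemma Vnum_add_two {n : ℕ} (hn : Odd n) :
    Vnum (n+2) = Vnum n + 2/3 + 1 / (3 * 2^(n+1)) := by
  have hM := three_mul_Mnum_add_one hn
  have hle : Mnum n ≤ 2^n := by rw [pow_succ] at hM; omega
  rw [Vnum_eq_prefixVariance, Vnum_eq_prefixVariance, Mnum_add_two hn,
    prefixVariance_succ_add (hle.trans (Nat.pow_le_pow_right two_pos n.le_succ)),
    prefixVariance_succ_of_le hle]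
  have hM' : (Mnum n : ℝ) = (2^(n+1) - 1) / 3 := by
    have : (3 * Mnum n + 1 : ℝ) = 2^(n+1) := by exact_mod_cast hM
    linarith
  rw [hM']
  field_simp
  ring

/-- For odd `k ≥ 3`, `V_k ≥ V_{k-2} + 2/3`. -/
theorem Vnum_recursive_lower_bound (k : ℕ) (hk : Odd k) (hk3 : 3 ≤ k) :
    Vnum (k - 2) + 2/3 ≤ Vnum k := by
  obtain ⟨n, rfl⟩ : ∃ n, k = n + 2 := ⟨k - 2, by omega⟩
  have hn : Odd n := by simpa [Nat.odd_add] using hk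
  rw [Nat.add_sub_cancel, Vnum_add_two hn]
  have : (0 : ℝ) < 1 / (3 * 2^(n+1)) := by positivity
  linarith
end
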